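/- arXiv:2410.20492 — 4 statements merged into one kernel-verified Lean document; each statement's English description precedes it below -/
import Mathlib

section
/- Let λ/μ be a skew shape. The skew Ferrers graph G_{λ/μ} is connected if and only if μ_{i−1} ≤ λ_i − 1 for all 2 ≤ i ≤ n. -/
open CategoryTheory CategoryTheory.Limits MvPolynomial

noncomputable section

namespace SkewTab

/-! ### Partitions and skew shapes (0-indexed) -/

/-- `lam` is a partition with exactly `n` positive parts (0-indexed),
extended by `0` beyond index `n - 1`. -/
def IsPartitionFn (n : ℕ) (lam : ℕ → ℕ) : Prop :=
  0 < n ∧ Antitone lam ∧ (∀ i, i < n → 0 < lam i) ∧ ∀ i, n ≤ i → lam i = 0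

/-- `λ/μ` is a skew shape with `n` rows (0-indexed): `λ_i > μ_i ≥ 0` and `μ_n = 0`. -/
def IsSkewShape (n : ℕ) (lam mu : ℕ → ℕ) : Prop :=
  0 < n ∧ Antitone lam ∧ Antitone mu ∧ (∀ i, i < n → mu i < lam i) ∧
    (∀ i, n ≤ i → lam i = 0) ∧ mu (n - 1) = 0

/-- The conjugate partition: `conj lam j = #{i : lam i > j}` (0-indexed). -/
def conj (lam : ℕ → ℕ) (j : ℕ) : ℕ := Nat.card {i | j < lam i}

/-- The set of boxes of the skew diagram `λ/μ` (0-indexed `(row, column)` pairs). -/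
def skewDiagram (lam mu : ℕ → ℕ) : Set (ℕ × ℕ) :=
  {p | mu p.1 ≤ p.2 ∧ p.2 < lam p.1}

/-- The set of boxes of the Ferrers diagram of a partition. -/
def ferrers (nu : ℕ → ℕ) : Set (ℕ × ℕ) := {p | p.2 < nu p.1}

/-- The block of the Ferrers diagram of `nu` containing the box `p`:  blocks are the
rectangular regions cut out by the horizontal lines at the values of the conjugate
partition and the vertical lines at the values of the partition. -/
def blockOf (nu : ℕ → ℕ) (p : ℕ × ℕ) : Set (ℕ × ℕ) :=
  {q | q.2 < nu q.1 ∧ nu q.1 = nu p.1 ∧ conj nu q.2 = conj nu p.2}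

/-- A box `(i,j)` of the diagram of `nu` lies in a *corner block* iff its block has no
block to its right nor below it. -/
def InCornerBlock (nu : ℕ → ℕ) (i j : ℕ) : Prop :=
  j < nu i ∧ conj nu (nu i - 1) = conj nu j ∧ nu (conj nu j - 1) = nu i

/-- A partition is unmixed iff all its corner blocks are square
(height of the block = width of the block). -/
def IsUnmixedPartition (nu : ℕ → ℕ) : Prop :=
  (∃ n, IsPartitionFn n nu) ∧
    ∀ i j, InCornerBlock nu i j →
      conj nu (nu i - 1) - conj nu (nu i) = nu (conj nu j - 1) - nu (conj nu j)

/-- A partition all of whose corner blocks are single boxes (1 × 1):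
the condition defining prime Cohen-Macaulay shapes. -/
def IsCMPartition (nu : ℕ → ℕ) : Prop :=
  (∃ n, IsPartitionFn n nu) ∧
    ∀ i j, InCornerBlock nu i j →
      conj nu (nu i - 1) - conj nu (nu i) = 1 ∧ nu (conj nu j - 1) - nu (conj nu j) = 1

/-- A copy of (the diagram of) a partition `nu` placed in the plane.  If `upper = true`
it is placed rotated by 180° and anchored at the bottom-right position `(row, col)`
(an upper triangular shape, hugging the top-right); if `upper = false` it is placed as is,
translated by `(row, col)` (a lower triangular shape, hugging the bottom-left). -/
structure PlacedShape where
  nu : ℕ → ℕ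
  row : ℕ
  col : ℕ
  upper : Bool

/-- The embedding of the abstract diagram of `B.nu` into the plane. -/
def PlacedShape.emb (B : PlacedShape) : ℕ × ℕ → ℕ × ℕ := fun p =>
  if B.upper then (B.row - p.1, B.col - p.2) else (B.row + p.1, B.col + p.2)

/-- The set of boxes of a placed shape. -/
def PlacedShape.boxes (B : PlacedShape) : Set (ℕ × ℕ) := B.emb '' ferrers B.nu

/-- For an upper triangular placed shape the anchor must leave room for the whole
(rotated) diagram. -/
def PlacedShape.Valid (B : PlacedShape) : Prop :=
  B.upper = true → conj B.nu 0 ≤ B.row + 1 ∧ B.nu 0 ≤ B.col + 1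

/-- The two extremal blocks (top-right and bottom-left corner blocks) of a placed
shape, as subsets of the plane. -/
def PlacedShape.extremalBlocks (B : PlacedShape) : Set (Set (ℕ × ℕ)) :=
  {B.emb '' blockOf B.nu (0, B.nu 0 - 1), B.emb '' blockOf B.nu (conj B.nu 0 - 1, 0)}

/-- `D` decomposes as a union of prime shapes `B 0, …, B (t-1)` (each a placed copy of a
partition satisfying `P`), consecutive shapes being of alternating (upper/lower) type and
intersecting exactly in a common extremal block. -/
def IsPrimeDecomposition (P : (ℕ → ℕ) → Prop) (D : Set (ℕ × ℕ)) (t : ℕ)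
    (B : ℕ → PlacedShape) : Prop :=
  0 < t ∧ (∀ k, k < t → P (B k).nu ∧ (B k).Valid) ∧
    (⋃ k ∈ Set.Iio t, (B k).boxes) = D ∧
    (∀ k, k + 1 < t → (B k).upper ≠ (B (k + 1)).upper) ∧
    ∀ k, k + 1 < t →
      (B k).boxes ∩ (B (k + 1)).boxes ∈ (B k).extremalBlocks ∧
      (B k).boxes ∩ (B (k + 1)).boxes ∈ (B (k + 1)).extremalBlocks

/-- The filling `w` is weakly increasing along both rows and columns on the boxes of `S`. -/
def WeaklyIncreasingOn (w : ℕ → ℕ → ℕ) (S : Set (ℕ × ℕ)) : Prop :=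
  (∀ i j, (i, j) ∈ S → (i, j + 1) ∈ S → w i j ≤ w i (j + 1)) ∧
    ∀ i j, (i, j) ∈ S → (i + 1, j) ∈ S → w i j ≤ w (i + 1) j

/-- The filling `w` is weakly decreasing along both rows and columns on the boxes of `S`. -/
def WeaklyDecreasingOn (w : ℕ → ℕ → ℕ) (S : Set (ℕ × ℕ)) : Prop :=
  (∀ i j, (i, j) ∈ S → (i, j + 1) ∈ S → w i (j + 1) ≤ w i j) ∧
    ∀ i j, (i, j) ∈ S → (i + 1, j) ∈ S → w (i + 1) j ≤ w i j

/-! ### Ideals and graphs attached to skew shapes -/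

/-- The skew Ferrers ideal `I_{λ/μ}` in `k[x_1,…,x_n,y_1,…,y_m]`, `m = λ_1`. -/
def skewIdeal (k : Type) [Field k] (n : ℕ) (lam mu : ℕ → ℕ) :
    Ideal (MvPolynomial (Fin n ⊕ Fin (lam 0)) k) :=
  Ideal.span {q | ∃ (i : Fin n) (j : Fin (lam 0)),
    mu (i : ℕ) ≤ (j : ℕ) ∧ (j : ℕ) < lam (i : ℕ) ∧ q = X (Sum.inl i) * X (Sum.inr j)}

/-- The skew tableau ideal `I(Y)` of the filling `w` of the skew shape `λ/μ`. -/
def tableauIdeal (k : Type) [Field k] (n : ℕ) (lam mu : ℕ → ℕ) (w : ℕ → ℕ → ℕ) :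
    Ideal (MvPolynomial (Fin n ⊕ Fin (lam 0)) k) :=
  Ideal.span {q | ∃ (i : Fin n) (j : Fin (lam 0)),
    mu (i : ℕ) ≤ (j : ℕ) ∧ (j : ℕ) < lam (i : ℕ) ∧
      q = (X (Sum.inl i) * X (Sum.inr j)) ^ w (i : ℕ) (j : ℕ)}

/-- The skew tableau ideal of the skew tableau obtained from `Y` by keeping only the rows
in `Rs` and the columns in `Cs`. -/
def tableauIdealRC (k : Type) [Field k] (n m : ℕ) (lam mu : ℕ → ℕ) (w : ℕ → ℕ → ℕ)
    (Rs : Set (Fin n)) (Cs : Set (Fin m)) : Ideal (MvPolynomial (↥Rs ⊕ ↥Cs) k) :=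
  Ideal.span {q | ∃ (i : ↥Rs) (j : ↥Cs),
    mu (i.1 : ℕ) ≤ (j.1 : ℕ) ∧ (j.1 : ℕ) < lam (i.1 : ℕ) ∧
      q = (X (Sum.inl i) * X (Sum.inr j)) ^ w (i.1 : ℕ) (j.1 : ℕ)}

/-- The skew Ferrers graph `G_{λ/μ}`, a bipartite graph on `{x_1,…,x_n} ⊔ {y_1,…,y_m}`. -/
def skewGraph (n : ℕ) (lam mu : ℕ → ℕ) : SimpleGraph (Fin n ⊕ Fin (lam 0)) :=
  SimpleGraph.fromRel fun a b => ∃ (i : Fin n) (j : Fin (lam 0)),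
    mu (i : ℕ) ≤ (j : ℕ) ∧ (j : ℕ) < lam (i : ℕ) ∧ a = Sum.inl i ∧ b = Sum.inr j

/-- The edge ideal of a simple graph. -/
def edgeIdeal (k : Type) [Field k] {V : Type} (G : SimpleGraph V) :
    Ideal (MvPolynomial V k) :=
  Ideal.span {q | ∃ u v, G.Adj u v ∧ q = X u * X v}

/-- The edge ideal of an edge-weighted simple graph. -/
def edgeIdealW (k : Type) [Field k] {V : Type} (G : SimpleGraph V) (w : V → V → ℕ) :
    Ideal (MvPolynomial V k) :=
  Ideal.span {q | ∃ u v, G.Adj u v ∧ q = (X u * X v) ^ w u v}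

/-! ### Homological notions -/

/-- The homogeneous maximal ideal of a polynomial ring. -/
def maxIdeal (k : Type) [Field k] (σ : Type) : Ideal (MvPolynomial σ k) :=
  Ideal.span (Set.range (X : σ → MvPolynomial σ k))

/-- The `i`-th local cohomology of the `R`-module `M` supported at the ideal `J`. -/
def localCoh {R : Type} [CommRing R] (J : Ideal R) (i : ℕ) (M : Type) [AddCommGroup M]
    [Module R M] : ModuleCat R :=
  (localCohomology J i).obj (ModuleCat.of R M)

/-- The Krull dimension of a module, `dim (R / ann M)`. -/
def moduleDim (R : Type) [CommRing R] (M : Type) [AddCommGroup M] [Module R M] :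
    WithBot ℕ∞ :=
  ringKrullDim (R ⧸ Module.annihilator R M)

/-- A module `M` is Cohen-Macaulay (w.r.t. the maximal ideal `J`) if
`H^i_J(M) = 0` for all `i < dim M`. -/
def IsCMModule {R : Type} [CommRing R] (J : Ideal R) (M : Type) [AddCommGroup M]
    [Module R M] : Prop :=
  ∀ i : ℕ, (i : WithBot ℕ∞) < moduleDim R M → IsZero (localCoh J i M)

/-- An ideal `I` is Cohen-Macaulay if `H^i_J(R/I) = 0` for all `i < dim R/I`
(`J` the maximal ideal). -/
def IsCMIdeal {R : Type} [CommRing R] (J I : Ideal R) : Prop :=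
  ∀ i : ℕ, (i : WithBot ℕ∞) < ringKrullDim (R ⧸ I) → IsZero (localCoh J i (R ⧸ I))

/-- An ideal `I` is generalized Cohen-Macaulay if `H^i_J(R/I)` has finite length for
all `i < dim R/I`. -/
def IsGCMIdeal {R : Type} [CommRing R] (J I : Ideal R) : Prop :=
  ∀ i : ℕ, (i : WithBot ℕ∞) < ringKrullDim (R ⧸ I) → IsFiniteLength R (localCoh J i (R ⧸ I))

/-- The canonical map `Ext^i(R/J, M) → H^i_J(M)`, i.e. the structure map of the colimit
defining local cohomology, at the first power of `J`. -/
def extToLocalCoh {R : Type} [CommRing R] (J : Ideal R) (i : ℕ) (M : ModuleCat R) :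
    ((localCohomology.diagram (localCohomology.idealPowersDiagram J) i).obj
        (Opposite.op (Opposite.op (1 : ℕ)))).obj M ⟶ (localCohomology J i).obj M :=
  have := localCohomology.hasColimitDiagram (localCohomology.idealPowersDiagram J) i
  (colimit.ι (localCohomology.diagram (localCohomology.idealPowersDiagram J) i)
    (Opposite.op (Opposite.op (1 : ℕ)))).app M

/-- An ideal `I` is Buchsbaum if the canonical map `Ext^i(R/J, R/I) → H^i_J(R/I)` is
surjective for all `i < dim R/I` (`J` the maximal ideal). -/
def IsBuchsbaumIdeal {R : Type} [CommRing R] (J I : Ideal R) : Prop :=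
  ∀ i : ℕ, (i : WithBot ℕ∞) < ringKrullDim (R ⧸ I) →
    Function.Surjective (extToLocalCoh J i (ModuleCat.of R (R ⧸ I)))

/-- An ideal `I` is unmixed if `dim R/P = dim R/I` for all associated primes `P` of `R/I`. -/
def IsUnmixedIdeal {R : Type} [CommRing R] (I : Ideal R) : Prop :=
  ∀ P ∈ associatedPrimes R (R ⧸ I), ringKrullDim (R ⧸ P) = ringKrullDim (R ⧸ I)

/-- A submodule of `S/J` (`S` a polynomial ring) is graded if it is the image of a
homogeneous ideal of `S`. -/
def IsGradedSubmodule (k σ : Type) [Field k] (J : Ideal (MvPolynomial σ k))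
    (N : Submodule (MvPolynomial σ k) (MvPolynomial σ k ⧸ J)) : Prop :=
  letI := MvPolynomial.gradedAlgebra (σ := σ) (R := k)
  ∃ K : Ideal (MvPolynomial σ k), Ideal.IsHomogeneous (homogeneousSubmodule σ k) K ∧
    ∀ x, x ∈ N ↔ x ∈ K.map (Ideal.Quotient.mk J)

/-- A (homogeneous) ideal `J` of a polynomial ring `S` is sequentially Cohen-Macaulay if
`S/J` admits a filtration `0 = M_0 ⊂ M_1 ⊂ ⋯ ⊂ M_r = S/J` by graded submodules such that
every quotient `M_{i+1}/M_i` is Cohen-Macaulay and the dimensions of the quotients are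
strictly increasing. -/
def IsSCMIdeal (k σ : Type) [Field k] (J : Ideal (MvPolynomial σ k)) : Prop :=
  ∃ (r : ℕ) (M : ℕ → Submodule (MvPolynomial σ k) (MvPolynomial σ k ⧸ J)),
    M 0 = ⊥ ∧ M r = ⊤ ∧ (∀ i, i < r → M i < M (i + 1)) ∧
    (∀ i, i ≤ r → IsGradedSubmodule k σ J (M i)) ∧
    (∀ i, i < r → IsCMModule (maxIdeal k σ)
      (↥(M (i + 1)) ⧸ Submodule.comap (M (i + 1)).subtype (M i))) ∧
    ∀ i, i + 2 ≤ r →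
      moduleDim (MvPolynomial σ k)
          (↥(M (i + 1)) ⧸ Submodule.comap (M (i + 1)).subtype (M i)) <
        moduleDim (MvPolynomial σ k)
          (↥(M (i + 2)) ⧸ Submodule.comap (M (i + 2)).subtype (M (i + 1)))

/-- A graph is sequentially Cohen-Macaulay if its edge ideal is. -/
def IsSCMGraph (k : Type) [Field k] {V : Type} (G : SimpleGraph V) : Prop :=
  IsSCMIdeal k V (edgeIdeal k G)

/-! ### Monomial ideals -/

/-- A monomial of a polynomial ring. -/
def IsMonomial {k σ : Type} [Field k] (u : MvPolynomial σ k) : Prop :=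
  ∃ d : σ →₀ ℕ, u = monomial d 1

/-- A monomial ideal of a polynomial ring. -/
def IsMonomialIdeal {k σ : Type} [Field k] (I : Ideal (MvPolynomial σ k)) : Prop :=
  ∃ T : Set (σ →₀ ℕ), I = Ideal.span ((fun d => (monomial d (1 : k) : MvPolynomial σ k)) '' T)

/-! ### Saturated partitions -/

/-- A partition is saturated if it is either strictly decreasing, or
`{λ_i, λ_i - 1, …, 1} ⊆ {λ_1, …, λ_n}` where `i` is the smallest index with
`λ_i = λ_{i+1}` (0-indexed here). -/
def IsSaturated (n : ℕ) (lam : ℕ → ℕ) : Prop :=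
  StrictAntiOn lam (Set.Iio n) ∨
    ∃ i, i + 1 < n ∧ lam i = lam (i + 1) ∧ (∀ j, j < i → lam j ≠ lam (j + 1)) ∧
      ∀ v, 0 < v → v ≤ lam i → ∃ a, a < n ∧ lam a = v

/-! ### Vertex decomposability -/

/-- A set `T` of vertices is independent in `G`. -/
def IsIndepSet {V : Type} (G : SimpleGraph V) (T : Finset V) : Prop :=
  ∀ u ∈ T, ∀ v ∈ T, ¬G.Adj u v

open Classical in
/-- The induced subgraph of `G` on a finite vertex set `A` is vertex decomposable:
either it has no edges, or it has a shredding vertex `v`, i.e. a vertex such that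
`G \ v` and `G \ N[v]` are vertex decomposable and no independent set of `G \ N[v]`
is a maximal independent set of `G \ v`. -/
def IsVertexDecomposable {V : Type} (G : SimpleGraph V) : Finset V → Prop := fun A =>
  (∀ u ∈ A, ∀ v ∈ A, ¬G.Adj u v) ∨
    ∃ v, ∃ _ : v ∈ A,
      IsVertexDecomposable G (A.erase v) ∧
      IsVertexDecomposable G (A.filter fun u => u ≠ v ∧ ¬G.Adj v u) ∧
      ∀ T ⊆ A.filter fun u => u ≠ v ∧ ¬G.Adj v u, IsIndepSet G T →
        ¬(T ⊆ A.erase v ∧ IsIndepSet G T ∧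
            ∀ u ∈ A.erase v, u ∉ T → ∃ t ∈ T, G.Adj u t)
termination_by A => A.card
decreasing_by
  · exact Finset.card_erase_lt_of_mem ‹_›
  · exact Finset.card_lt_card (Finset.filter_ssubset.mpr ⟨v, ‹_›, by simp⟩)

/-!
Rows `k` and `k + 1` (0-indexed) are joined through column `μ_k` exactly when `μ_k < λ_{k+1}`,
and every column `j` meets the first row `i` with `μ_i ≤ j`; so under the condition all rows,
hence all vertices, lie in the component of row `0`. Conversely, if `λ_{k+1} ≤ μ_k` then no edge
leaves the set formed by the rows `≤ k` and the columns `≥ μ_k`, which separates row `0` from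
row `k + 1`.
-/

theorem _root_.SimpleGraph.Reachable.iff_of_forall_adj {V : Type*} {G : SimpleGraph V}
    {P : V → Prop} (hP : ∀ u v, G.Adj u v → (P u ↔ P v)) {u v : V} (h : G.Reachable u v) :
    P u ↔ P v := by
  obtain ⟨p⟩ := h
  induction p with
  | nil => rfl
  | cons hadj _ ih => exact (hP _ _ hadj).trans ih

variable {n : ℕ} {lam mu : ℕ → ℕ}

theorem skewGraph_adj_iff {u v : Fin n ⊕ Fin (lam 0)} :
    (skewGraph n lam mu).Adj u v ↔ ∃ (i : Fin n) (j : Fin (lam 0)), mu i ≤ j ∧ j < lam i ∧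
      (u = .inl i ∧ v = .inr j ∨ u = .inr j ∧ v = .inl i) := by
  simp only [skewGraph, SimpleGraph.fromRel_adj]
  constructor
  · rintro ⟨-, ⟨i, j, h1, h2, rfl, rfl⟩ | ⟨i, j, h1, h2, rfl, rfl⟩⟩
    exacts [⟨i, j, h1, h2, .inl ⟨rfl, rfl⟩⟩, ⟨i, j, h1, h2, .inr ⟨rfl, rfl⟩⟩]
  · rintro ⟨i, j, h1, h2, ⟨rfl, rfl⟩ | ⟨rfl, rfl⟩⟩
    exacts [⟨by simp, .inl ⟨i, j, h1, h2, rfl, rfl⟩⟩, ⟨by simp, .inr ⟨i, j, h1, h2, rfl, rfl⟩⟩]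

theorem skewGraph_adj_inl_inr {i : Fin n} {j : Fin (lam 0)} (h1 : mu i ≤ j) (h2 : j < lam i) :
    (skewGraph n lam mu).Adj (.inl i) (.inr j) :=
  skewGraph_adj_iff.2 ⟨i, j, h1, h2, .inl ⟨rfl, rfl⟩⟩

theorem le_iff_le_of_lam_succ_le_mu (hlam : Antitone lam) (hmu : Antitone mu) {k a b : ℕ}
    (hcut : lam (k + 1) ≤ mu k) (h1 : mu a ≤ b) (h2 : b < lam a) : a ≤ k ↔ mu k ≤ b := by
  refine ⟨fun ha => (hmu ha).trans h1, fun hb => ?_⟩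
  by_contra! ha
  have := hlam (show k + 1 ≤ a by omega)
  omega

theorem skewGraph_not_reachable_of_lam_succ_le_mu (hlam : Antitone lam) (hmu : Antitone mu)
    {k : ℕ} (hk : k + 1 < n) (hcut : lam (k + 1) ≤ mu k) :
    ¬(skewGraph n lam mu).Reachable (.inl ⟨0, by omega⟩) (.inl ⟨k + 1, hk⟩) := by
  intro h
  let side : Fin n ⊕ Fin (lam 0) → Prop := Sum.elim (fun a => (a : ℕ) ≤ k) fun b => mu k ≤ b
  have hside : ∀ u v, (skewGraph n lam mu).Adj u v → (side u ↔ side v) := by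
    intro u v huv
    obtain ⟨i, j, h1, h2, ⟨rfl, rfl⟩ | ⟨rfl, rfl⟩⟩ := skewGraph_adj_iff.1 huv
    · exact le_iff_le_of_lam_succ_le_mu hlam hmu hcut h1 h2
    · exact (le_iff_le_of_lam_succ_le_mu hlam hmu hcut h1 h2).symm
  simpa [side] using h.iff_of_forall_adj hside

theorem skewGraph_reachable_inl_succ (hlam : Antitone lam) (hmu : Antitone mu) {k : ℕ}
    (hk : k + 1 < n) (hcond : mu k < lam (k + 1)) :
    (skewGraph n lam mu).Reachable (.inl ⟨k, by omega⟩) (.inl ⟨k + 1, hk⟩) := by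
  have hcol : mu k < lam 0 := hcond.trans_le (hlam (Nat.zero_le _))
  have hup : (skewGraph n lam mu).Adj (.inl ⟨k, by omega⟩) (.inr ⟨mu k, hcol⟩) :=
    skewGraph_adj_inl_inr le_rfl (hcond.trans_le (hlam k.le_succ))
  have hdown : (skewGraph n lam mu).Adj (.inl ⟨k + 1, hk⟩) (.inr ⟨mu k, hcol⟩) :=
    skewGraph_adj_inl_inr (hmu k.le_succ) hcond
  exact hup.reachable.trans hdown.reachable.symm

theorem skewGraph_reachable_inl_zero (hlam : Antitone lam) (hmu : Antitone mu) (hn : 0 < n)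
    (hcond : ∀ k, k + 1 < n → mu k < lam (k + 1)) (i : Fin n) :
    (skewGraph n lam mu).Reachable (.inl ⟨0, hn⟩) (.inl i) := by
  obtain ⟨i, hi⟩ := i
  induction i with
  | zero => rfl
  | succ k ih =>
    exact (ih (by omega)).trans (skewGraph_reachable_inl_succ hlam hmu hi (hcond k hi))

theorem skewGraph_exists_adj_inr (hn : 0 < n) (hmu_last : mu (n - 1) = 0)
    (hcond : ∀ k, k + 1 < n → mu k < lam (k + 1)) (j : Fin (lam 0)) :
    ∃ i, (skewGraph n lam mu).Adj (.inl i) (.inr j) := by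
  have hex : ∃ i, mu i ≤ j := ⟨n - 1, by omega⟩
  have hfind_lt : Nat.find hex < n :=
    (Nat.find_min' hex (by omega : mu (n - 1) ≤ j)).trans_lt (by omega)
  suffices ∃ i < n, mu i ≤ j ∧ j < lam i by
    obtain ⟨i, hi, h1, h2⟩ := this
    exact ⟨⟨i, hi⟩, skewGraph_adj_inl_inr h1 h2⟩
  refine ⟨Nat.find hex, hfind_lt, Nat.find_spec hex, ?_⟩
  cases hfind : Nat.find hex with
  | zero => exact j.isLt
  | succ k =>
    have hprev : j < mu k := not_le.1 (Nat.find_min hex (by omega))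
    exact hprev.trans (hcond k (by omega))

/-- The skew Ferrers graph `G_{λ/μ}` is connected iff
`μ_{i-1} ≤ λ_i - 1` for all `2 ≤ i ≤ n` (stated here 0-indexed: for all `1 ≤ i < n`). -/
theorem stmt_5 (n : ℕ) (lam mu : ℕ → ℕ) (hshape : IsSkewShape n lam mu) :
    (skewGraph n lam mu).Connected ↔
      ∀ i, 1 ≤ i → i < n → mu (i - 1) ≤ lam i - 1 := by
  obtain ⟨hn, hlam, hmu, hlt, -, hmu_last⟩ := hshape
  have hcond_iff : (∀ i, 1 ≤ i → i < n → mu (i - 1) ≤ lam i - 1) ↔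
      ∀ k, k + 1 < n → mu k < lam (k + 1) := by
    refine ⟨fun h k hk => ?_, fun h i hi hin => ?_⟩
    · have hk' := h (k + 1) (by omega) hk
      rw [Nat.add_sub_cancel] at hk'
      have := hlt (k + 1) hk
      omega
    · have hi' := h (i - 1) (by omega)
      rw [Nat.sub_add_cancel hi] at hi'
      omega
  rw [hcond_iff]
  constructor
  · intro hconn k hk
    by_contra! hcut
    exact skewGraph_not_reachable_of_lam_succ_le_mu hlam hmu hk hcut (hconn.preconnected _ _)
  · intro hcond
    refine (SimpleGraph.connected_iff_exists_forall_reachable _).2 ⟨.inl ⟨0, hn⟩, ?_⟩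
    rintro (i | j)
    · exact skewGraph_reachable_inl_zero hlam hmu hn hcond i
    · obtain ⟨i, hi⟩ := skewGraph_exists_adj_inr hn hmu_last hcond j
      exact (skewGraph_reachable_inl_zero hlam hmu hn hcond i).trans hi.reachable

end SkewTab
end
end

section
/- Let I be a monomial ideal in a polynomial ring S, let J = √(I : u) be an associated radical of I (u a monomial not in I), and let K = J : v be an associated radical of J (v a monomial not in J). Then K is an associated radical of I, i.e., there exists a monomial w ∉ I with K = √(I : w). -/
open CategoryTheory CategoryTheory.Limits MvPolynomial

noncomputable section

namespace Ideal

variable {R : Type*} [CommRing R]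

theorem colon_span_singleton_colon_span_singleton (I : Ideal R) (a b : R) :
    (I.colon (span {a})).colon (span {b}) = I.colon (span {a * b}) := by
  ext x
  simp only [mem_colon_span_singleton, mul_assoc, mul_comm b a]

theorem monotone_colon_span_singleton_pow (J : Ideal R) (v : R) :
    Monotone fun n : ℕ => J.colon (span {v ^ n}) := by
  intro m n hmn x hx
  rw [mem_colon_span_singleton] at hx ⊢
  rw [← Nat.add_sub_cancel' hmn, pow_add, ← mul_assoc]
  exact J.mul_mem_right _ hx

/-- In a noetherian ring, `√J : v = √(J : v ^ N)` once the chain `J : v ^ n` has become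
stationary at `N`. -/
theorem exists_radical_colon_span_singleton_eq [IsNoetherianRing R] (J : Ideal R) (v : R) :
    ∃ N : ℕ, J.radical.colon (span {v}) = (J.colon (span {v ^ N})).radical := by
  obtain ⟨N, hN⟩ := monotone_stabilizes_iff_noetherian.mpr inferInstance
    ⟨_, monotone_colon_span_singleton_pow J v⟩
  refine ⟨N, le_antisymm (fun x hx => ?_) (fun x hx => ?_)⟩
  · obtain ⟨m, hm⟩ := mem_colon_span_singleton.mp hx
    have hxm : x ^ m ∈ J.colon (span {v ^ max N m}) :=
      monotone_colon_span_singleton_pow J v (le_max_right N m)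
        (mem_colon_span_singleton.mpr (mul_pow x v m ▸ hm))
    have hstable : J.colon (span {v ^ max N m}) = J.colon (span {v ^ N}) :=
      (hN (max N m) (le_max_left N m)).symm
    exact ⟨m, hstable ▸ hxm⟩
  · obtain ⟨m, hm⟩ := hx
    refine mem_colon_span_singleton.mpr ⟨m + N, ?_⟩
    have hxm : x ^ m * v ^ N ∈ J := mem_colon_span_singleton.mp hm
    rw [show (x * v) ^ (m + N) = x ^ N * v ^ m * (x ^ m * v ^ N) by ring]
    exact J.mul_mem_left _ hxm

end Ideal

namespace SkewTab

theorem IsMonomial.mul_pow {k σ : Type} [Field k] {u v : MvPolynomial σ k}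
    (hu : IsMonomial u) (hv : IsMonomial v) (n : ℕ) : IsMonomial (u * v ^ n) := by
  obtain ⟨d, rfl⟩ := hu
  obtain ⟨e, rfl⟩ := hv
  exact ⟨d + n • e, by rw [monomial_pow, one_pow, monomial_mul, one_mul]⟩

theorem stmt_6_general (k σ : Type) [Field k] [Fintype σ] (I : Ideal (MvPolynomial σ k))
    (u : MvPolynomial σ k) (hu : IsMonomial u)
    (v : MvPolynomial σ k) (hv : IsMonomial v)
    (hvJ : v ∉ (Submodule.colon I (Ideal.span {u})).radical) :
    ∃ w : MvPolynomial σ k, IsMonomial w ∧ w ∉ I ∧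
      Submodule.colon ((Submodule.colon I (Ideal.span {u})).radical) (Ideal.span {v}) =
        (Submodule.colon I (Ideal.span {w})).radical := by
  obtain ⟨N, hN⟩ := (I.colon (Ideal.span {u})).exists_radical_colon_span_singleton_eq v
  rw [Ideal.colon_span_singleton_colon_span_singleton] at hN
  refine ⟨u * v ^ N, hu.mul_pow hv N, fun hw => hvJ ⟨N, ?_⟩, hN⟩
  exact Ideal.mem_colon_span_singleton.mpr (mul_comm u (v ^ N) ▸ hw)

/-- Let `I` be a monomial ideal, `J = √(I : u)` an associated radical of
`I` (`u` a monomial not in `I`), and `K = J : v` an associated radical of `J` (`v` a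
monomial not in `J`).  Then `K` is an associated radical of `I`: there is a monomial
`w ∉ I` with `K = √(I : w)`. -/
theorem stmt_6 (k σ : Type) [Field k] [Fintype σ] (I : Ideal (MvPolynomial σ k))
    (hI : IsMonomialIdeal I) (u : MvPolynomial σ k) (hu : IsMonomial u) (huI : u ∉ I)
    (v : MvPolynomial σ k) (hv : IsMonomial v)
    (hvJ : v ∉ (Submodule.colon I (Ideal.span {u})).radical) :
    ∃ w : MvPolynomial σ k, IsMonomial w ∧ w ∉ I ∧
      Submodule.colon ((Submodule.colon I (Ideal.span {u})).radical) (Ideal.span {v}) =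
        (Submodule.colon I (Ideal.span {w})).radical :=
  stmt_6_general k σ I u hu v hv hvJ

end SkewTab
end
end

section
/- Let G = K_{U,V} be a complete bipartite graph where both parts U and V have at least 2 vertices. Then G is not vertex decomposable. -/
open CategoryTheory CategoryTheory.Limits MvPolynomial

noncomputable section

namespace SkewTab

/-!
A graph with an edge is vertex decomposable only through a shredding vertex `v`, and then
`G \ N[v]` itself cannot be a maximal independent set of `G \ v`. In a complete multipartite
graph `G \ N[v]` is the rest of the part of `v`: it is independent, and when that part has
another vertex every vertex of the other parts is adjacent to it, so no vertex is shredding.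
-/

section VertexDecomposable

variable {V : Type}

def IsMaximalIndepSetIn (G : SimpleGraph V) (B T : Finset V) : Prop :=
  T ⊆ B ∧ IsIndepSet G T ∧ ∀ u ∈ B, u ∉ T → ∃ t ∈ T, G.Adj u t

open Classical in
theorem IsVertexDecomposable.exists_not_isMaximalIndepSetIn {G : SimpleGraph V}
    {A : Finset V} (hG : IsVertexDecomposable G A) (hA : ∃ u ∈ A, ∃ w ∈ A, G.Adj u w) :
    ∃ v ∈ A, ¬IsMaximalIndepSetIn G (A.erase v) (A.filter fun u => u ≠ v ∧ ¬G.Adj v u) := by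
  rw [IsVertexDecomposable] at hG
  obtain ⟨u, hu, w, hw, huw⟩ := hA
  rcases hG with hedgeless | ⟨v, hv, -, -, hshred⟩
  · exact absurd huw (hedgeless u hu w hw)
  · exact ⟨v, hv, fun hmax => hshred _ subset_rfl hmax.2.1 hmax⟩

theorem not_isVertexDecomposable_of_adj_iff_ne {ι : Type} {G : SimpleGraph V} (f : V → ι)
    (hadj : ∀ u w, G.Adj u w ↔ f u ≠ f w) {A : Finset V}
    (hparts : ∃ u ∈ A, ∃ w ∈ A, f u ≠ f w) (hsize : ∀ v ∈ A, ∃ t ∈ A, t ≠ v ∧ f t = f v) :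
    ¬IsVertexDecomposable G A := by
  classical
  intro hG
  obtain ⟨v, hv, hnot⟩ := hG.exists_not_isMaximalIndepSetIn (by simpa only [hadj] using hparts)
  refine hnot ⟨?_, ?_, ?_⟩
  · intro u hu
    simp only [Finset.mem_filter] at hu
    exact Finset.mem_erase.2 ⟨hu.2.1, hu.1⟩
  · intro u hu w hw
    simp only [Finset.mem_filter, hadj, not_not] at hu hw
    simp only [hadj, not_not, ← hu.2.2, hw.2.2]
  · intro u hu hunT
    obtain ⟨hne, huA⟩ := Finset.mem_erase.1 hu
    obtain ⟨t, htA, htv, hft⟩ := hsize v hv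
    have hfu : f u ≠ f v := fun h => hunT (by simp [hadj, huA, hne, h])
    exact ⟨t, by simp [hadj, htA, htv, hft], by rwa [hadj, hft]⟩

end VertexDecomposable

theorem completeBipartiteGraph_adj_iff {α β : Type} (u w : α ⊕ β) :
    (completeBipartiteGraph α β).Adj u w ↔ u.isLeft ≠ w.isLeft := by
  cases u <;> cases w <;> simp

theorem Sum.exists_ne_isLeft_eq {α β : Type} [Nontrivial α] [Nontrivial β] (v : α ⊕ β) :
    ∃ t, t ≠ v ∧ t.isLeft = v.isLeft := by
  rcases v with a | b
  · obtain ⟨a', ha'⟩ := exists_ne a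
    exact ⟨.inl a', by simpa using ha', rfl⟩
  · obtain ⟨b', hb'⟩ := exists_ne b
    exact ⟨.inr b', by simpa using hb', rfl⟩

/-- A complete bipartite graph `K_{U,V}` with both parts of size at
least `2` is not vertex decomposable. -/
theorem stmt_7 (α β : Type) [Fintype α] [Fintype β]
    (hα : 2 ≤ Fintype.card α) (hβ : 2 ≤ Fintype.card β) :
    ¬ IsVertexDecomposable (completeBipartiteGraph α β) Finset.univ := by
  have : Nontrivial α := Fintype.one_lt_card_iff_nontrivial.1 hα
  have : Nontrivial β := Fintype.one_lt_card_iff_nontrivial.1 hβ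
  obtain ⟨a⟩ := (inferInstance : Nonempty α)
  obtain ⟨b⟩ := (inferInstance : Nonempty β)
  refine not_isVertexDecomposable_of_adj_iff_ne Sum.isLeft completeBipartiteGraph_adj_iff
    ⟨.inl a, Finset.mem_univ _, .inr b, Finset.mem_univ _, by simp⟩ fun v _ => ?_
  obtain ⟨t, htv, ht⟩ := Sum.exists_ne_isLeft_eq v
  exact ⟨t, Finset.mem_univ t, htv, ht⟩

end SkewTab
end
end

section
/- Let λ be a partition and μ its conjugate partition. If λ is saturated, then μ is saturated. -/
open CategoryTheory CategoryTheory.Limits MvPolynomial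

noncomputable section

namespace SkewTab

/-! Conjugation is the Galois connection `i < λ'_j ↔ j < λ_i`. Consequently `λ'` has a repeat
`λ'_j = λ'_{j+1}` only if no part of `λ` equals `j + 1`, and every `v ≥ 1` with `λ_v < λ_{v-1}`
is a part of `λ'`, namely `λ'_{λ_v} = v`. If `λ` has a first repeat `λ_i = λ_{i+1}` and takes
all values `1, …, λ_i`, then a missing value `j + 1` forces `λ_i ≤ j`, hence `λ'_j ≤ i`; so `λ`
strictly decreases up to index `λ'_j` and `λ'` takes all values `1, …, λ'_j`. -/

section Conjugate

variable {lam : ℕ → ℕ} {n : ℕ}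

lemma setOf_lt_apply_eq_Iio (hA : Antitone lam) (hn : lam n = 0) (j : ℕ) :
    ∃ k, {i | j < lam i} = Set.Iio k := by
  classical
  have hex : ∃ k, lam k ≤ j := ⟨n, by omega⟩
  refine ⟨Nat.find hex, Set.ext fun i => ⟨fun hi => ?_, fun hi => ?_⟩⟩
  · by_contra hik
    exact (not_lt.2 ((hA (not_lt.1 hik)).trans (Nat.find_spec hex))) hi
  · exact not_le.1 (Nat.find_min hex hi)

lemma lt_conj_iff (hA : Antitone lam) (hn : lam n = 0) {i j : ℕ} :
    i < conj lam j ↔ j < lam i := by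
  obtain ⟨k, hk⟩ := setOf_lt_apply_eq_Iio hA hn j
  have hconj : conj lam j = k := by
    rw [conj, hk, Nat.card_coe_set_eq, Set.ncard_Iio_nat]
  rw [hconj, ← Set.mem_Iio, ← hk, Set.mem_ofPred_eq]

lemma conj_le_iff (hA : Antitone lam) (hn : lam n = 0) {i j : ℕ} :
    conj lam j ≤ i ↔ lam i ≤ j := by
  simpa only [not_lt] using (lt_conj_iff hA hn).not

lemma conj_antitone (hA : Antitone lam) (hn : lam n = 0) : Antitone (conj lam) := by
  intro j j' hjj'
  by_contra! hlt
  exact lt_irrefl _ ((lt_conj_iff hA hn).2 (hjj'.trans_lt ((lt_conj_iff hA hn).1 hlt)))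

lemma conj_zero (hpart : IsPartitionFn n lam) : conj lam 0 = n := by
  obtain ⟨-, hA, hpos, h0⟩ := hpart
  refine eq_of_forall_lt_iff fun i => (lt_conj_iff hA (h0 n le_rfl)).trans ⟨fun hi => ?_, hpos i⟩
  by_contra! hni
  exact hi.ne' (h0 i hni)

lemma conj_apply_eq_of_lt_apply_pred (hA : Antitone lam) (hn : lam n = 0) {v : ℕ}
    (hv : 0 < v) (hlt : lam v < lam (v - 1)) : conj lam (lam v) = v :=
  eq_of_forall_lt_iff fun i => (lt_conj_iff hA hn).trans
    ⟨hA.reflect_lt, fun hi => hlt.trans_le (hA (by omega))⟩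

lemma apply_ne_succ_of_conj_eq_conj_succ (hA : Antitone lam) (hn : lam n = 0) {j : ℕ}
    (h : conj lam j = conj lam (j + 1)) (i : ℕ) : lam i ≠ j + 1 := by
  intro hi
  have hmem : i < conj lam j := (lt_conj_iff hA hn).2 (by omega)
  rw [h, lt_conj_iff hA hn] at hmem
  omega

end Conjugate

section Saturated

lemma exists_first_repeat_of_not_strictAntiOn {α : Type*} [PartialOrder α] {f : ℕ → α}
    (hf : Antitone f) {m : ℕ} (h : ¬StrictAntiOn f (Set.Iio m)) :
    ∃ i, i + 1 < m ∧ f i = f (i + 1) ∧ ∀ j, j < i → f j ≠ f (j + 1) := by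
  classical
  have hex : ∃ i, i + 1 < m ∧ f i = f (i + 1) := by
    by_contra! hne
    refine h ((strictAntiOn_Iic_of_succ_lt (n := m - 1) fun k hk => ?_).mono fun i hi => ?_)
    · rw [Order.succ_eq_add_one]
      exact (hf k.le_succ).lt_of_ne (hne k (by omega)).symm
    · simp only [Set.mem_Iio, Set.mem_Iic] at hi ⊢
      omega
  exact ⟨Nat.find hex, (Nat.find_spec hex).1, (Nat.find_spec hex).2,
    fun j hj hrep => Nat.find_min hex hj ⟨by have := (Nat.find_spec hex).1; omega, hrep⟩⟩

lemma isSaturated_of_forall_repeat {f : ℕ → ℕ} {m : ℕ} (hf : Antitone f)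
    (h : ∀ i, i + 1 < m → f i = f (i + 1) → ∀ v, 0 < v → v ≤ f i → ∃ a, a < m ∧ f a = v) :
    IsSaturated m f := by
  by_cases hs : StrictAntiOn f (Set.Iio m)
  · exact Or.inl hs
  · obtain ⟨i, him, hrep, hfirst⟩ := exists_first_repeat_of_not_strictAntiOn hf hs
    exact Or.inr ⟨i, him, hrep, hfirst, h i him hrep⟩

lemma IsSaturated.apply_lt_apply_pred {n : ℕ} {lam : ℕ → ℕ} (hsat : IsSaturated n lam)
    (hpart : IsPartitionFn n lam) {j : ℕ} (hj : ∀ a, lam a ≠ j + 1) {v : ℕ} (hv0 : 0 < v)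
    (hv : v ≤ conj lam j) : lam v < lam (v - 1) := by
  have hconj_zero := conj_zero hpart
  obtain ⟨-, hA, hpos, h0⟩ := hpart
  have hzero : lam n = 0 := h0 n le_rfl
  rcases hsat with hstrict | ⟨i, -, -, hfirst, hvalues⟩
  · have hvn : v ≤ n :=
      hv.trans (hconj_zero ▸ conj_antitone hA hzero j.zero_le)
    rcases hvn.lt_or_eq with hvn | rfl
    · exact hstrict (by simp only [Set.mem_Iio]; omega) (by simp only [Set.mem_Iio]; omega)
        (by omega)
    · exact hzero ▸ hpos _ (by omega)
  · have hij : lam i ≤ j := by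
      by_contra! hji
      obtain ⟨a, -, ha⟩ := hvalues (j + 1) j.succ_pos hji
      exact hj a ha
    have hvi : v ≤ i := hv.trans ((conj_le_iff hA hzero).2 hij)
    have hne := hfirst (v - 1) (by omega)
    rw [Nat.sub_add_cancel hv0] at hne
    exact (hA (Nat.sub_le v 1)).lt_of_ne hne.symm

end Saturated

/-- If a partition `λ` is saturated, then so is its conjugate. -/
theorem stmt_8 (n : ℕ) (lam : ℕ → ℕ) (hpart : IsPartitionFn n lam)
    (hsat : IsSaturated n lam) : IsSaturated (lam 0) (conj lam) := by
  have hA : Antitone lam := hpart.2.1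
  have hzero : lam n = 0 := hpart.2.2.2 n le_rfl
  refine isSaturated_of_forall_repeat (conj_antitone hA hzero) fun j _ hrep v hv0 hv => ?_
  have hlt := hsat.apply_lt_apply_pred hpart
    (apply_ne_succ_of_conj_eq_conj_succ hA hzero hrep) hv0 hv
  exact ⟨lam v, hlt.trans_le (hA v.pred.zero_le),
    conj_apply_eq_of_lt_apply_pred hA hzero hv0 hlt⟩

end SkewTab
end
end
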